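/- arXiv:1309.3243 — 4 statements merged into one kernel-verified Lean document; each statement's English description precedes it below -/
import Mathlib

section
/- Let (μ_t)_{t≥0} be the solution of the measure-valued evolution equation with mating, natural death and competition death, and set M(t) = μ_t(F). In the case of semi-random mating: if inf_z D(z) ≥ sup_z p(z), then the population becomes extinct, i.e. lim_{t→∞} M(t) = 0; if sup_z D(z) < inf_z p(z), then the population is persistent, i.e. liminf_{t→∞} M(t) > 0 whenever M(0) > 0. In the case of assortative mating the same conclusions hold with sup_z p(z) and inf_z p(z) replaced by 1. -/
open MeasureTheory Filter ENNReal

noncomputable section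

/-- Semi-random mating rate: `m(x,y;μ) = p(x)p(y) / ∫ p dμ`. -/
def semiRandomRate {E : Type*} [MeasurableSpace E] (p : E → ℝ) :
    E → E → Measure E → ℝ :=
  fun x y μ => p x * p y / ∫ z, p z ∂μ

/-- Assortative mating rate. -/
def assortativeRate {E : Type*} [MeasurableSpace E] (a : E → E → ℝ) :
    E → E → Measure E → ℝ :=
  fun x y μ => a x y / (2 * ∫ r, a x r ∂μ) + a x y / (2 * ∫ r, a y r ∂μ)

/-- Mild (integrated) form of the measure-valued evolution equation. -/
def IsMildSolution {E : Type*} [MeasurableSpace E] (F : Set E)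
    (m : E → E → Measure E → ℝ) (K : E → E → Measure E)
    (D I : E → ℝ) (U : E → E → ℝ)
    (μ₀ : Measure E) (μ : ℝ → Measure E) : Prop :=
  μ 0 = μ₀ ∧
  (∀ t : ℝ, 0 ≤ t → IsFiniteMeasure (μ t) ∧ μ t Fᶜ = 0) ∧
  ∀ f : E → ℝ, Measurable f → (∃ Cf : ℝ, ∀ x, |f x| ≤ Cf) →
    ∀ t : ℝ, 0 ≤ t →
      (∫ x, f x ∂(μ t)) = (∫ x, f x ∂μ₀)
        + ∫ s in (0:ℝ)..t,
            ((∫ x, ∫ y, m x y (μ s) * ∫ z, f z ∂(K x y) ∂(μ s) ∂(μ s))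
              - ∫ x, f x * (D x + I x * ∫ y, U x y ∂(μ s)) ∂(μ s))

/-!
Integrating the equation against `f = 1` shows that the total mass `M(t) = μ_t(F)` solves
`M' = B - Ψ`. The total mating rate `B` is `∫ p dμ_t`, between `inf p · M` and `sup p · M`, for
semi-random mating, and exactly `M` for assortative mating (by symmetry of `a`, each half of the
rate integrates to `M / 2`); the total death rate satisfies
`(inf D + I̲ U̲ M) M ≤ Ψ ≤ (sup D + Ī Ū M) M`. So `M` is squeezed between two logistic vector
fields. If `inf D ≥ sup p`, the upper one is `-I̲ U̲ M²`, which drives `M` to `0`. If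
`sup D < inf p`, the lower one is positive for small `M` and the upper one negative for large `M`,
so `M` stays between two positive constants.

The mild form gives `M(t) = M(0) + ∫₀ᵗ G` only as an interval integral, which is `0` by convention
when `G` is not integrable. Testing the equation against indicators shows that in that case the
solution stays at `μ₀` from then on, and this makes `G` integrable after all.
-/

open Set

theorem mul_sub_mul_le_sq_div {x r κ : ℝ} (hκ : 0 < κ) : x * (r - κ * x) ≤ r ^ 2 / (4 * κ) := by
  rw [le_div_iff₀ (by positivity)]
  nlinarith [sq_nonneg (r - 2 * κ * x)]

theorem abs_mul_sub_mul_le {x R r κ : ℝ} (hx : 0 ≤ x) (hxR : x ≤ R) :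
    |x * (r - κ * x)| ≤ R * (|r| + |κ| * R) := by
  rw [abs_mul, abs_of_nonneg hx]
  refine mul_le_mul hxR ((abs_sub _ _).trans ?_) (abs_nonneg _) (hx.trans hxR)
  rw [abs_mul, abs_of_nonneg hx]
  gcongr

theorem integrableOn_Ioc_of_forall_lt {f : ℝ → ℝ} {a b C : ℝ}
    (hf : ∀ u ∈ Ioo a b, IntegrableOn f (Ioc a u)) (hC : ∀ x ∈ Ioc a b, |f x| ≤ C) :
    IntegrableOn f (Ioc a b) := by
  rcases le_or_gt b a with hba | hab
  · simp [Ioc_eq_empty_of_le hba]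
  obtain ⟨u, -, hu, hlim⟩ := exists_seq_strictMono_tendsto' hab
  refine integrableOn_Ioc_of_intervalIntegral_norm_bounded_right (I := C * (b - a))
    (fun n => hf (u n) (hu n)) hlim (Filter.Eventually.of_forall fun n => ?_)
  have hsub : Ioc a (u n) ⊆ Ioc a b := Ioc_subset_Ioc_right (hu n).2.le
  have hC0 : 0 ≤ C := (abs_nonneg _).trans (hC (u n) ⟨(hu n).1, (hu n).2.le⟩)
  calc ∫ x in Ioc a (u n), ‖f x‖ ≤ ‖∫ x in Ioc a (u n), ‖f x‖‖ := Real.le_norm_self _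
    _ ≤ C * volume.real (Ioc a (u n)) :=
        norm_setIntegral_le_of_norm_le_const measure_Ioc_lt_top fun x hx => by
          simpa using hC x (hsub hx)
    _ ≤ C * (b - a) := by
        rw [Real.volume_real_Ioc_of_le (hu n).1.le]
        gcongr
        exact (hu n).2.le

section IntegralEquation

variable {M G : ℝ → ℝ}

theorem intervalIntegrable_of_le (hG : ∀ t, 0 ≤ t → IntervalIntegrable G volume 0 t) {s t : ℝ}
    (hs : 0 ≤ s) (hst : s ≤ t) : IntervalIntegrable G volume s t :=
  (hG t (hs.trans hst)).mono_set (uIcc_subset_uIcc (mem_uIcc_of_le hs hst) right_mem_uIcc)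

theorem eq_add_integral_of_le (hMG : ∀ t, 0 ≤ t → M t = M 0 + ∫ s in (0:ℝ)..t, G s)
    (hG : ∀ t, 0 ≤ t → IntervalIntegrable G volume 0 t) {s t : ℝ} (hs : 0 ≤ s) (hst : s ≤ t) :
    M t = M s + ∫ u in s..t, G u := by
  rw [hMG t (hs.trans hst), hMG s hs, ← intervalIntegral.integral_add_adjacent_intervals (hG s hs)
    (intervalIntegrable_of_le hG hs hst), add_assoc]

theorem le_add_mul_of_forall_le (hMG : ∀ t, 0 ≤ t → M t = M 0 + ∫ s in (0:ℝ)..t, G s)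
    (hG : ∀ t, 0 ≤ t → IntervalIntegrable G volume 0 t) {s t c : ℝ} (hs : 0 ≤ s) (hst : s ≤ t)
    (hc : ∀ u ∈ Ioo s t, G u ≤ c) : M t ≤ M s + c * (t - s) := by
  have := intervalIntegral.integral_mono_on_of_le_Ioo hst (intervalIntegrable_of_le hG hs hst)
    intervalIntegrable_const hc
  rw [intervalIntegral.integral_const, smul_eq_mul] at this
  rw [eq_add_integral_of_le hMG hG hs hst]
  linarith

theorem continuousOn_Icc_of_eq_integral (hMG : ∀ t, 0 ≤ t → M t = M 0 + ∫ s in (0:ℝ)..t, G s)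
    (hG : ∀ t, 0 ≤ t → IntervalIntegrable G volume 0 t) {t : ℝ} (ht : 0 ≤ t) :
    ContinuousOn M (Icc 0 t) := by
  have hprim := intervalIntegral.continuousOn_primitive_interval
    ((intervalIntegrable_iff' (μ := volume)).1 (hG t ht))
  rw [uIcc_of_le ht] at hprim
  exact (continuousOn_const.add hprim).congr fun x hx => hMG x hx.1

theorem le_of_forall_lt_imp_nonpos (hMG : ∀ t, 0 ≤ t → M t = M 0 + ∫ s in (0:ℝ)..t, G s)
    (hG : ∀ t, 0 ≤ t → IntervalIntegrable G volume 0 t) {R t : ℝ} (h0 : M 0 ≤ R)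
    (hR : ∀ s, 0 ≤ s → R < M s → G s ≤ 0) (ht : 0 ≤ t) : M t ≤ R := by
  by_contra! hlt
  set S := Icc 0 t ∩ M ⁻¹' Iic R
  have hSbdd : BddAbove S := ⟨t, fun x hx => hx.1.2⟩
  have hmem : sSup S ∈ S :=
    ((continuousOn_Icc_of_eq_integral hMG hG ht).preimage_isClosed_of_isClosed isClosed_Icc
      isClosed_Iic).csSup_mem ⟨0, ⟨le_rfl, ht⟩, h0⟩ hSbdd
  have hdecr := le_add_mul_of_forall_le hMG hG hmem.1.1 hmem.1.2 (c := 0) fun u hu =>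
    hR u (hmem.1.1.trans hu.1.le) <| lt_of_not_ge fun hle =>
      hu.1.not_ge (le_csSup hSbdd ⟨⟨hmem.1.1.trans hu.1.le, hu.2.le⟩, hle⟩)
  have : M (sSup S) ≤ R := hmem.2
  linarith

theorem le_of_forall_lt_imp_nonneg (hMG : ∀ t, 0 ≤ t → M t = M 0 + ∫ s in (0:ℝ)..t, G s)
    (hG : ∀ t, 0 ≤ t → IntervalIntegrable G volume 0 t) {r t : ℝ} (h0 : r ≤ M 0)
    (hr : ∀ s, 0 ≤ s → M s < r → 0 ≤ G s) (ht : 0 ≤ t) : r ≤ M t := by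
  have := le_of_forall_lt_imp_nonpos (M := -M) (G := -G) (R := -r)
    (fun t ht => by simp [hMG t ht, intervalIntegral.integral_neg]; ring)
    (fun t ht => (hG t ht).neg) (by simpa using h0)
    (fun s hs h => by simpa using hr s hs (by simpa using h)) ht
  simpa using this

end IntegralEquation

structure LogisticSandwich (M G : ℝ → ℝ) (r₁ κ₁ r₂ κ₂ : ℝ) : Prop where
  integral_eq : ∀ t, 0 ≤ t → M t = M 0 + ∫ s in (0:ℝ)..t, G s
  nonneg : ∀ t, 0 ≤ t → 0 ≤ M t
  le_rate : ∀ t, 0 ≤ t → M t * (r₁ - κ₁ * M t) ≤ G t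
  rate_le : ∀ t, 0 ≤ t → G t ≤ M t * (r₂ - κ₂ * M t)
  const_of_not_intervalIntegrable : ∀ t, 0 ≤ t → ¬ IntervalIntegrable G volume 0 t →
    ∀ s, t ≤ s → M s = M 0 ∧ G s = G 0

namespace LogisticSandwich

variable {M G : ℝ → ℝ} {r₁ κ₁ r₂ κ₂ : ℝ}

theorem exists_abs_le (h : LogisticSandwich M G r₁ κ₁ r₂ κ₂) (hκ₂ : 0 < κ₂) (t : ℝ) :
    ∃ C, ∀ s ∈ Icc 0 t, |G s| ≤ C := by
  set c := r₂ ^ 2 / (4 * κ₂)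
  have hc : 0 ≤ c := by positivity
  have hGc : ∀ s, 0 ≤ s → G s ≤ c := fun s hs =>
    (h.rate_le s hs).trans (mul_sub_mul_le_sq_div hκ₂)
  set R := M 0 + c * t
  have hMR : ∀ s ∈ Icc 0 t, M s ≤ R := by
    intro s hs
    by_cases hint : IntervalIntegrable G volume 0 s
    · have := intervalIntegral.integral_mono_on hs.1 hint intervalIntegrable_const
        fun u hu => hGc u hu.1
      rw [intervalIntegral.integral_const, smul_eq_mul] at this
      rw [h.integral_eq s hs.1]
      nlinarith [hs.2]
    · rw [(h.const_of_not_intervalIntegrable s hs.1 hint s le_rfl).1]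
      nlinarith [hs.1.trans hs.2]
  refine ⟨max (R * (|r₁| + |κ₁| * R)) (R * (|r₂| + |κ₂| * R)), fun s hs => ?_⟩
  have hM0 := h.nonneg s hs.1
  exact (abs_le_max_abs_abs (h.le_rate s hs.1) (h.rate_le s hs.1)).trans
    (max_le_max (abs_mul_sub_mul_le hM0 (hMR s hs)) (abs_mul_sub_mul_le hM0 (hMR s hs)))

/-- Let `τ` be the first time at which integrability fails: before `τ` the rate is locally
integrable and bounded, after `τ` it is constant, so it is integrable across `τ` after all. -/
theorem intervalIntegrable (h : LogisticSandwich M G r₁ κ₁ r₂ κ₂) (hκ₂ : 0 < κ₂) {t : ℝ}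
    (ht : 0 ≤ t) : IntervalIntegrable G volume 0 t := by
  by_contra hbad
  set B := {t | 0 ≤ t ∧ ¬ IntervalIntegrable G volume 0 t}
  have hBbdd : BddBelow B := ⟨0, fun b hb => hb.1⟩
  have hτ0 : 0 ≤ sInf B := le_csInf ⟨t, ht, hbad⟩ fun b hb => hb.1
  have hτt : sInf B ≤ t := csInf_le hBbdd ⟨ht, hbad⟩
  have hconst : ∀ s, sInf B < s → G s = G 0 := fun s hs => by
    obtain ⟨b, hb, hbs⟩ := exists_lt_of_csInf_lt (s := B) ⟨t, ht, hbad⟩ hs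
    exact (h.const_of_not_intervalIntegrable b hb.1 hb.2 s hbs.le).2
  obtain ⟨C, hC⟩ := h.exists_abs_le hκ₂ t
  have hbefore : IntegrableOn G (Ioc 0 (sInf B)) := by
    refine integrableOn_Ioc_of_forall_lt (fun u hu => ?_) fun x hx => hC x ⟨hx.1.le, hx.2.trans hτt⟩
    by_contra hu'
    rw [← intervalIntegrable_iff_integrableOn_Ioc_of_le hu.1.le] at hu'
    exact (csInf_le hBbdd ⟨hu.1.le, hu'⟩).not_gt hu.2
  have hafter : IntegrableOn G (Ioc (sInf B) t) :=
    (integrableOn_const measure_Ioc_lt_top.ne).congr_fun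
      (fun s hs => (hconst s hs.1).symm) measurableSet_Ioc
  rw [intervalIntegrable_iff_integrableOn_Ioc_of_le ht, ← Ioc_union_Ioc_eq_Ioc hτ0 hτt] at hbad
  exact hbad (hbefore.union hafter)

theorem tendsto_zero (h : LogisticSandwich M G r₁ κ₁ r₂ κ₂) (hr₂ : r₂ ≤ 0) (hκ₂ : 0 < κ₂) :
    Tendsto M atTop (nhds 0) := by
  have hint := fun t (ht : 0 ≤ t) => h.intervalIntegrable hκ₂ ht
  have hG : ∀ s, 0 ≤ s → G s ≤ -(κ₂ * M s ^ 2) := fun s hs => by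
    nlinarith [h.rate_le s hs, h.nonneg s hs]
  have hanti : ∀ s t, 0 ≤ s → s ≤ t → M t ≤ M s := fun s t hs hst => by
    have := le_add_mul_of_forall_le h.integral_eq hint hs hst (c := 0) fun u hu => by
      nlinarith [hG u (hs.trans hu.1.le), sq_nonneg (M u)]
    linarith
  rw [Metric.tendsto_atTop]
  intro ε hε
  set T := (M 0 + 1) / (κ₂ * ε ^ 2)
  have hT : 0 ≤ T := div_nonneg (by linarith [h.nonneg 0 le_rfl]) (by positivity)
  have hMT : M T < ε := by
    by_contra! hεT
    have := le_add_mul_of_forall_le h.integral_eq hint le_rfl hT (c := -(κ₂ * ε ^ 2))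
      fun u hu => (hG u hu.1.le).trans <| neg_le_neg <| mul_le_mul_of_nonneg_left
        (pow_le_pow_left₀ hε.le (hεT.trans (hanti u T hu.1.le hu.2.le)) 2) hκ₂.le
    have hTε : κ₂ * ε ^ 2 * T = M 0 + 1 := mul_div_cancel₀ _ (by positivity)
    linarith [h.nonneg T hT]
  refine ⟨T, fun t ht => ?_⟩
  rw [Real.dist_eq, sub_zero, abs_of_nonneg (h.nonneg t (hT.trans ht))]
  exact (hanti T t hT ht).trans_lt hMT

theorem liminf_pos (h : LogisticSandwich M G r₁ κ₁ r₂ κ₂) (hr₁ : 0 < r₁) (hκ₁ : 0 < κ₁)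
    (hκ₂ : 0 < κ₂) (hM : 0 < M 0) : 0 < liminf M atTop := by
  have hint := fun t (ht : 0 ≤ t) => h.intervalIntegrable hκ₂ ht
  have hupper : ∀ t, 0 ≤ t → M t ≤ max (M 0) (r₂ / κ₂) :=
    fun t => le_of_forall_lt_imp_nonpos h.integral_eq hint (le_max_left _ _) fun s hs hlt => by
      have : r₂ < κ₂ * M s := (div_lt_iff₀' hκ₂).1 ((le_max_right _ _).trans_lt hlt)
      nlinarith [h.rate_le s hs, h.nonneg s hs]
  have hlower : ∀ t, 0 ≤ t → min (M 0) (r₁ / κ₁) ≤ M t :=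
    fun t => le_of_forall_lt_imp_nonneg h.integral_eq hint (min_le_left _ _) fun s hs hlt => by
      have : κ₁ * M s < r₁ := (lt_div_iff₀' hκ₁).1 (hlt.trans_le (min_le_right _ _))
      nlinarith [h.le_rate s hs, h.nonneg s hs]
  have hbdd : IsBoundedUnder (· ≤ ·) atTop M :=
    isBoundedUnder_of_eventually_le ((eventually_ge_atTop 0).mono hupper)
  exact (lt_min hM (div_pos hr₁ hκ₁)).trans_le
    (le_liminf_of_le hbdd.isCoboundedUnder_ge ((eventually_ge_atTop 0).mono hlower))

end LogisticSandwich

section Population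

variable {α : Type*} [MeasurableSpace α] {ν : Measure α} {F : Set α}

theorem integrable_of_ae_mem_Icc [IsFiniteMeasure ν] {g : α → ℝ} {c C : ℝ}
    (hg : AEStronglyMeasurable g ν) (hgF : ∀ᵐ x ∂ν, g x ∈ Icc c C) : Integrable g ν :=
  .of_bound hg (max |c| |C|) <| hgF.mono fun _ hx => abs_le_max_abs_abs hx.1 hx.2

theorem integral_mem_Icc_of_ae_mem_Icc [IsFiniteMeasure ν] {g : α → ℝ} {c C : ℝ}
    (hg : AEStronglyMeasurable g ν) (hgF : ∀ᵐ x ∂ν, g x ∈ Icc c C) :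
    ∫ x, g x ∂ν ∈ Icc (c * ν.real univ) (C * ν.real univ) := by
  have hint := integrable_of_ae_mem_Icc hg hgF
  constructor
  · simpa [mul_comm] using integral_mono_ae (integrable_const c) hint (hgF.mono fun _ hx => hx.1)
  · simpa [mul_comm] using integral_mono_ae hint (integrable_const C) (hgF.mono fun _ hx => hx.2)

def deathRate (D I : α → ℝ) (U : α → α → ℝ) (ν : Measure α) (x : α) : ℝ :=
  D x + I x * ∫ y, U x y ∂ν

def growthRate (m : α → α → Measure α → ℝ) (K : α → α → Measure α) (D I : α → ℝ)
    (U : α → α → ℝ) (ν : Measure α) (f : α → ℝ) : ℝ :=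
  (∫ x, ∫ y, m x y ν * ∫ z, f z ∂(K x y) ∂ν ∂ν) - ∫ x, f x * deathRate D I U ν x ∂ν

def IsMatingRateBetween (F : Set α) (m : α → α → Measure α → ℝ) (bl bu : ℝ) : Prop :=
  ∀ ν : Measure α, IsFiniteMeasure ν → (∀ᵐ x ∂ν, x ∈ F) →
    Integrable (fun q : α × α => m q.1 q.2 ν) (ν.prod ν) ∧
      ∫ q, m q.1 q.2 ν ∂(ν.prod ν) ∈ Icc (bl * ν.real univ) (bu * ν.real univ)

theorem integral_semiRandomRate [SFinite ν] (p : α → ℝ) :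
    ∫ q, semiRandomRate p q.1 q.2 ν ∂(ν.prod ν) = ∫ x, p x ∂ν := by
  simp only [semiRandomRate]
  rw [integral_div, integral_prod_mul, mul_self_div_self]

theorem isMatingRateBetween_semiRandomRate {p : α → ℝ} {bl bu : ℝ} (hp : Measurable p)
    (hpF : ∀ x ∈ F, p x ∈ Icc bl bu) : IsMatingRateBetween F (semiRandomRate p) bl bu := by
  intro ν _ hF
  have hpF' : ∀ᵐ x ∂ν, p x ∈ Icc bl bu := hF.mono hpF
  have hpint := integrable_of_ae_mem_Icc hp.aestronglyMeasurable hpF'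
  refine ⟨(hpint.mul_prod hpint).div_const _, ?_⟩
  rw [integral_semiRandomRate]
  exact integral_mem_Icc_of_ae_mem_Icc hp.aestronglyMeasurable hpF'

theorem ae_mem_prod [SFinite ν] (hF : ∀ᵐ x ∂ν, x ∈ F) :
    ∀ᵐ q ∂(ν.prod ν), q.1 ∈ F ∧ q.2 ∈ F :=
  (Measure.quasiMeasurePreserving_fst.ae hF).and (Measure.quasiMeasurePreserving_snd.ae hF)

theorem integrable_and_integral_div_two_integral [IsFiniteMeasure ν] {a : α → α → ℝ} {al au : ℝ}
    (ha : Measurable fun q : α × α => a q.1 q.2) (hal : 0 < al)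
    (haF : ∀ x ∈ F, ∀ y ∈ F, a x y ∈ Icc al au) (hF : ∀ᵐ x ∂ν, x ∈ F) :
    Integrable (fun q : α × α => a q.1 q.2 / (2 * ∫ r, a q.1 r ∂ν)) (ν.prod ν) ∧
      ∫ q, a q.1 q.2 / (2 * ∫ r, a q.1 r ∂ν) ∂(ν.prod ν) = ν.real univ / 2 := by
  rcases eq_zero_or_neZero ν with rfl | _
  · simp
  have hA : ∀ x ∈ F, al * ν.real univ ≤ ∫ r, a x r ∂ν := fun x hx =>
    (integral_mem_Icc_of_ae_mem_Icc (ha.comp measurable_prodMk_left).aestronglyMeasurable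
      (hF.mono fun y hy => haF x hx y hy)).1
  have hAmeas : Measurable fun x => ∫ r, a x r ∂ν :=
    ha.stronglyMeasurable.integral_prod_right'.measurable
  have hmpos : 0 < al * ν.real univ := mul_pos hal measureReal_univ_pos
  have hint : Integrable (fun q : α × α => a q.1 q.2 / (2 * ∫ r, a q.1 r ∂ν)) (ν.prod ν) := by
    refine integrable_of_ae_mem_Icc (c := 0) (C := au / (2 * (al * ν.real univ)))
      (ha.div (measurable_const.mul (hAmeas.comp measurable_fst))).aestronglyMeasurable
      ((ae_mem_prod hF).mono fun q hq => ?_)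
    have haq := haF q.1 hq.1 q.2 hq.2
    have hAq := hA q.1 hq.1
    exact ⟨div_nonneg (hal.le.trans haq.1) (by linarith),
      div_le_div₀ (hal.le.trans (haq.1.trans haq.2)) haq.2 (by positivity) (by linarith)⟩
  refine ⟨hint, ?_⟩
  rw [integral_prod _ hint]
  calc ∫ x, ∫ y, a x y / (2 * ∫ r, a x r ∂ν) ∂ν ∂ν = ∫ _x, (1 / 2 : ℝ) ∂ν :=
        integral_congr_ae <| hF.mono fun x hx => by
          simp only [integral_div]
          field_simp [(hmpos.trans_le (hA x hx)).ne']
    _ = ν.real univ / 2 := by simp [div_eq_mul_inv]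

theorem isMatingRateBetween_assortativeRate {a : α → α → ℝ} {al au : ℝ}
    (ha : Measurable fun q : α × α => a q.1 q.2) (hasymm : ∀ x y, a x y = a y x) (hal : 0 < al)
    (haF : ∀ x ∈ F, ∀ y ∈ F, a x y ∈ Icc al au) :
    IsMatingRateBetween F (assortativeRate a) 1 1 := by
  intro ν _ hF
  obtain ⟨hint, hval⟩ := integrable_and_integral_div_two_integral ha hal haF hF
  have hswap : (fun q : α × α => a q.1 q.2 / (2 * ∫ r, a q.2 r ∂ν))
      = (fun q : α × α => a q.1 q.2 / (2 * ∫ r, a q.1 r ∂ν)) ∘ Prod.swap := by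
    ext q
    simp [hasymm q.1 q.2]
  have hint' : Integrable (fun q : α × α => a q.1 q.2 / (2 * ∫ r, a q.2 r ∂ν)) (ν.prod ν) :=
    hswap ▸ hint.swap
  have hval' : ∫ q, a q.1 q.2 / (2 * ∫ r, a q.2 r ∂ν) ∂(ν.prod ν) = ν.real univ / 2 := by
    rw [hswap, ← hval]
    exact integral_prod_swap (μ := ν) (ν := ν) (fun q : α × α => a q.1 q.2 / (2 * ∫ r, a q.1 r ∂ν))
  have htotal : ∫ q, assortativeRate a q.1 q.2 ν ∂(ν.prod ν) = ν.real univ := by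
    simp only [assortativeRate]
    rw [integral_add hint hint', hval, hval']
    ring
  exact ⟨hint.add hint', by simp [htotal]⟩

variable {m : α → α → Measure α → ℝ} {K : α → α → Measure α} {D I : α → ℝ} {U : α → α → ℝ}

theorem measurable_deathRate [SFinite ν] (hD : Measurable D) (hI : Measurable I)
    (hU : Measurable fun q : α × α => U q.1 q.2) : Measurable (deathRate D I U ν) :=
  hD.add (hI.mul hU.stronglyMeasurable.integral_prod_right'.measurable)

theorem deathRate_mem_Icc [IsFiniteMeasure ν] {dl du Il Iu Ul Uu : ℝ} {x : α}
    (hU : Measurable fun q : α × α => U q.1 q.2) (hF : ∀ᵐ y ∂ν, y ∈ F)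
    (hDx : D x ∈ Icc dl du) (hIl : 0 ≤ Il) (hIx : I x ∈ Icc Il Iu) (hUl : 0 ≤ Ul)
    (hUx : ∀ y ∈ F, U x y ∈ Icc Ul Uu) :
    deathRate D I U ν x ∈ Icc (dl + Il * (Ul * ν.real univ)) (du + Iu * (Uu * ν.real univ)) := by
  have hJ := integral_mem_Icc_of_ae_mem_Icc
    (hU.comp measurable_prodMk_left).aestronglyMeasurable (hF.mono hUx)
  have hJ0 : 0 ≤ Ul * ν.real univ := by positivity
  exact ⟨add_le_add hDx.1 (mul_le_mul hIx.1 hJ.1 hJ0 (hIl.trans hIx.1)),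
    add_le_add hDx.2 (mul_le_mul hIx.2 hJ.2 (hJ0.trans hJ.1) (hIl.trans (hIx.1.trans hIx.2)))⟩

theorem integrable_and_integral_deathRate_mem_Icc [IsFiniteMeasure ν] {dl du Il Iu Ul Uu : ℝ}
    (hD : Measurable D) (hI : Measurable I) (hU : Measurable fun q : α × α => U q.1 q.2)
    (hF : ∀ᵐ x ∂ν, x ∈ F) (hDF : ∀ x ∈ F, D x ∈ Icc dl du) (hIl : 0 ≤ Il)
    (hIF : ∀ x ∈ F, I x ∈ Icc Il Iu) (hUl : 0 ≤ Ul) (hUF : ∀ x ∈ F, ∀ y ∈ F, U x y ∈ Icc Ul Uu) :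
    Integrable (deathRate D I U ν) ν ∧ ∫ x, deathRate D I U ν x ∂ν
      ∈ Icc ((dl + Il * (Ul * ν.real univ)) * ν.real univ)
        ((du + Iu * (Uu * ν.real univ)) * ν.real univ) := by
  have hbd := hF.mono fun x hx =>
    deathRate_mem_Icc hU hF (hDF x hx) hIl (hIF x hx) hUl (hUF x hx)
  have hmeas := (measurable_deathRate (ν := ν) hD hI hU).aestronglyMeasurable (μ := ν)
  exact ⟨integrable_of_ae_mem_Icc hmeas hbd, by
    simpa [mul_comm] using integral_mem_Icc_of_ae_mem_Icc hmeas hbd⟩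

theorem integrable_mul_integral_kernel {ρ : Measure (α × α)} {w : α × α → ℝ} {h : α → ℝ} {C : ℝ}
    (hw : Integrable w ρ) (hK : ∀ x y, IsProbabilityMeasure (K x y))
    (hKmeas : Measurable fun q : α × α => K q.1 q.2) (hh : Measurable h) (hC : ∀ x, |h x| ≤ C) :
    Integrable (fun q => w q * ∫ z, h z ∂(K q.1 q.2)) ρ := by
  let κ : ProbabilityTheory.Kernel (α × α) α := ⟨fun q => K q.1 q.2, hKmeas⟩
  refine hw.mul_bdd (c := C)
    (hh.stronglyMeasurable.integral_kernel (κ := κ)).aestronglyMeasurable (.of_forall fun q => ?_)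
  have := hK q.1 q.2
  exact (norm_integral_le_of_norm_le_const (.of_forall hC)).trans (by simp)

theorem growthRate_add [SFinite ν] (hK : ∀ x y, IsProbabilityMeasure (K x y))
    (hKmeas : Measurable fun q : α × α => K q.1 q.2)
    (hm : Integrable (fun q : α × α => m q.1 q.2 ν) (ν.prod ν))
    (hd : Integrable (deathRate D I U ν) ν) {f g : α → ℝ} {Cf Cg : ℝ} (hf : Measurable f)
    (hCf : ∀ x, |f x| ≤ Cf) (hg : Measurable g) (hCg : ∀ x, |g x| ≤ Cg) :
    growthRate m K D I U ν (f + g) = growthRate m K D I U ν f + growthRate m K D I U ν g := by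
  have hiter : ∀ (h : α → ℝ) (C : ℝ), Measurable h → (∀ x, |h x| ≤ C) →
      ∫ x, ∫ y, m x y ν * ∫ z, h z ∂(K x y) ∂ν ∂ν
        = ∫ q, m q.1 q.2 ν * ∫ z, h z ∂(K q.1 q.2) ∂(ν.prod ν) := fun h C hh hC =>
    (integral_prod _ (integrable_mul_integral_kernel hm hK hKmeas hh hC)).symm
  have hKsplit : ∀ q : α × α, ∫ z, (f + g) z ∂(K q.1 q.2)
      = (∫ z, f z ∂(K q.1 q.2)) + ∫ z, g z ∂(K q.1 q.2) := fun q =>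
    have := hK q.1 q.2
    integral_add' (integrable_of_ae_mem_Icc hf.aestronglyMeasurable
        (.of_forall fun z => abs_le.1 (hCf z)))
      (integrable_of_ae_mem_Icc hg.aestronglyMeasurable (.of_forall fun z => abs_le.1 (hCg z)))
  have hCfg : ∀ x, |(f + g) x| ≤ Cf + Cg := fun x =>
    (abs_add_le _ _).trans (add_le_add (hCf x) (hCg x))
  simp only [growthRate]
  rw [hiter _ _ (hf.add hg) hCfg, hiter f _ hf hCf, hiter g _ hg hCg]
  simp only [hKsplit, mul_add]
  simp only [Pi.add_apply, add_mul]
  rw [integral_add (integrable_mul_integral_kernel hm hK hKmeas hf hCf)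
      (integrable_mul_integral_kernel hm hK hKmeas hg hCg),
    integral_add (hd.bdd_mul hf.aestronglyMeasurable (.of_forall hCf))
      (hd.bdd_mul hg.aestronglyMeasurable (.of_forall hCg))]
  ring

theorem growthRate_one [SFinite ν] (hK : ∀ x y, IsProbabilityMeasure (K x y))
    (hm : Integrable (fun q : α × α => m q.1 q.2 ν) (ν.prod ν)) :
    growthRate m K D I U ν 1 = ∫ q, m q.1 q.2 ν ∂(ν.prod ν) - ∫ x, deathRate D I U ν x ∂ν := by
  have hK1 : ∀ x y, ∫ _z, (1 : ℝ) ∂(K x y) = 1 := fun x y => by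
    have := hK x y
    simp
  simp only [growthRate, Pi.one_apply, hK1, mul_one, one_mul]
  rw [integral_prod _ hm]

variable {μ₀ : Measure α} {μ : ℝ → Measure α}

theorem IsMildSolution.integral_eq (hμ : IsMildSolution F m K D I U μ₀ μ) {f : α → ℝ}
    (hf : Measurable f) (hfb : ∃ C, ∀ x, |f x| ≤ C) {t : ℝ} (ht : 0 ≤ t) :
    ∫ x, f x ∂(μ t) = ∫ x, f x ∂μ₀ + ∫ s in (0:ℝ)..t, growthRate m K D I U (μ s) f :=
  hμ.2.2 f hf hfb t ht

theorem IsMildSolution.integral_eq_of_not_intervalIntegrable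
    (hμ : IsMildSolution F m K D I U μ₀ μ)
    (hadd : ∀ σ, 0 ≤ σ → ∀ f : α → ℝ, Measurable f → (∃ C, ∀ x, |f x| ≤ C) →
      growthRate m K D I U (μ σ) (f + 1)
        = growthRate m K D I U (μ σ) f + growthRate m K D I U (μ σ) 1)
    {s : ℝ} (hs : 0 ≤ s)
    (hbad : ¬ IntervalIntegrable (fun σ => growthRate m K D I U (μ σ) 1) volume 0 s)
    {f : α → ℝ} {C : ℝ} (hf : Measurable f) (hC : ∀ x, |f x| ≤ C) :
    ∫ x, f x ∂(μ s) = ∫ x, f x ∂μ₀ := by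
  have hfrozen : ∀ g : α → ℝ, Measurable g → (∃ C, ∀ x, |g x| ≤ C) →
      ¬ IntervalIntegrable (fun σ => growthRate m K D I U (μ σ) g) volume 0 s →
      ∫ x, g x ∂(μ s) = ∫ x, g x ∂μ₀ := fun g hg hgb hint => by
    rw [hμ.integral_eq hg hgb hs, intervalIntegral.integral_undef hint, add_zero]
  by_cases hint : IntervalIntegrable (fun σ => growthRate m K D I U (μ σ) f) volume 0 s
  swap
  · exact hfrozen f hf ⟨C, hC⟩ hint
  -- otherwise the `1`-rate, the difference of the `(f + 1)`- and `f`-rates, would be integrable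
  have hsum := hfrozen (f + 1) (hf.add measurable_const)
    ⟨C + 1, fun x => (abs_add_le _ _).trans (by simp only [Pi.one_apply, abs_one]; linarith [hC x])⟩
    fun h => hbad <| (h.sub hint).congr fun σ hσ => by
      simp [hadd σ (by rw [uIoc_of_le hs] at hσ; exact hσ.1.le) f hf ⟨C, hC⟩]
  have hmass := hfrozen 1 measurable_const ⟨1, by simp⟩ hbad
  have : IsFiniteMeasure (μ s) := (hμ.2.1 s hs).1
  have : IsFiniteMeasure μ₀ := hμ.1 ▸ (hμ.2.1 0 le_rfl).1
  have hfint : ∀ ρ : Measure α, IsFiniteMeasure ρ → Integrable f ρ := fun ρ _ =>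
    integrable_of_ae_mem_Icc hf.aestronglyMeasurable (.of_forall fun x => abs_le.1 (hC x))
  simp only [Pi.add_apply, Pi.one_apply] at hmass hsum
  rw [integral_add (hfint _ inferInstance) (integrable_const 1),
    integral_add (hfint _ inferInstance) (integrable_const 1)] at hsum
  linarith

theorem IsMildSolution.eq_of_not_intervalIntegrable (hμ : IsMildSolution F m K D I U μ₀ μ)
    (hadd : ∀ σ, 0 ≤ σ → ∀ f : α → ℝ, Measurable f → (∃ C, ∀ x, |f x| ≤ C) →
      growthRate m K D I U (μ σ) (f + 1)
        = growthRate m K D I U (μ σ) f + growthRate m K D I U (μ σ) 1)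
    {t s : ℝ} (ht : 0 ≤ t) (hts : t ≤ s)
    (hbad : ¬ IntervalIntegrable (fun σ => growthRate m K D I U (μ σ) 1) volume 0 t) :
    μ s = μ₀ := by
  have hs : 0 ≤ s := ht.trans hts
  have : IsFiniteMeasure (μ s) := (hμ.2.1 s hs).1
  have : IsFiniteMeasure μ₀ := hμ.1 ▸ (hμ.2.1 0 le_rfl).1
  refine Measure.ext fun A hA => ?_
  have hμA := hμ.integral_eq_of_not_intervalIntegrable hadd hs
    (fun h => hbad (h.mono_set (uIcc_subset_uIcc left_mem_uIcc (mem_uIcc_of_le ht hts))))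
    (measurable_one.indicator hA) (C := 1) fun x => by by_cases hx : x ∈ A <;> simp [hx]
  rwa [integral_indicator_one hA, integral_indicator_one hA,
    measureReal_eq_measureReal_iff] at hμA

theorem IsMildSolution.logisticSandwich {bl bu dl du Il Iu Ul Uu : ℝ}
    (hμ : IsMildSolution F m K D I U μ₀ μ) (hK : ∀ x y, IsProbabilityMeasure (K x y))
    (hKmeas : Measurable fun q : α × α => K q.1 q.2) (hD : Measurable D) (hI : Measurable I)
    (hU : Measurable fun q : α × α => U q.1 q.2) (hm : IsMatingRateBetween F m bl bu)
    (hDF : ∀ x ∈ F, D x ∈ Icc dl du) (hIl : 0 ≤ Il) (hIF : ∀ x ∈ F, I x ∈ Icc Il Iu)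
    (hUl : 0 ≤ Ul) (hUF : ∀ x ∈ F, ∀ y ∈ F, U x y ∈ Icc Ul Uu) :
    LogisticSandwich (fun t => (μ t F).toReal) (fun t => growthRate m K D I U (μ t) 1)
      (bl - du) (Iu * Uu) (bu - dl) (Il * Ul) := by
  have hfin : ∀ t, 0 ≤ t → IsFiniteMeasure (μ t) := fun t ht => (hμ.2.1 t ht).1
  have hF : ∀ t, 0 ≤ t → ∀ᵐ x ∂(μ t), x ∈ F := fun t ht => mem_ae_iff.2 (hμ.2.1 t ht).2
  have hmass : ∀ t, 0 ≤ t → (μ t F).toReal = (μ t).real univ := fun t ht => by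
    rw [measure_congr (ae_eq_univ.2 (hμ.2.1 t ht).2)]
    rfl
  have hdeath := fun t ht =>
    have := hfin t ht
    integrable_and_integral_deathRate_mem_Icc hD hI hU (hF t ht) hDF hIl hIF hUl hUF
  have hrate : ∀ t, 0 ≤ t → growthRate m K D I U (μ t) 1
      = ∫ q, m q.1 q.2 (μ t) ∂((μ t).prod (μ t)) - ∫ x, deathRate D I U (μ t) x ∂(μ t) :=
    fun t ht => have := hfin t ht; growthRate_one hK (hm _ this (hF t ht)).1
  have hadd : ∀ σ, 0 ≤ σ → ∀ f : α → ℝ, Measurable f → (∃ C, ∀ x, |f x| ≤ C) →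
      growthRate m K D I U (μ σ) (f + 1)
        = growthRate m K D I U (μ σ) f + growthRate m K D I U (μ σ) 1 :=
    fun σ hσ f hf ⟨C, hC⟩ =>
      have := hfin σ hσ
      growthRate_add hK hKmeas (hm _ this (hF σ hσ)).1 (hdeath σ hσ).1 hf hC measurable_const
        (Cg := 1) (by simp)
  refine ⟨fun t ht => ?_, fun t _ => ENNReal.toReal_nonneg, fun t ht => ?_, fun t ht => ?_,
    fun t ht hbad s hts => ?_⟩
  · have := hμ.integral_eq (f := 1) measurable_const ⟨1, by simp⟩ ht
    simp only [Pi.one_apply, integral_const, smul_eq_mul, mul_one] at this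
    rw [hmass t ht, hmass 0 le_rfl, this, hμ.1]
  · have hbirth := (hm _ (hfin t ht) (hF t ht)).2
    rw [hrate t ht, hmass t ht]
    linear_combination hbirth.1 + (hdeath t ht).2.2
  · have hbirth := (hm _ (hfin t ht) (hF t ht)).2
    rw [hrate t ht, hmass t ht]
    linear_combination hbirth.2 + (hdeath t ht).2.1
  · have hμs := hμ.eq_of_not_intervalIntegrable hadd ht hts hbad
    exact ⟨by rw [hμs, hμ.1], by rw [hμs, hμ.1]⟩

end Population

theorem extinction_and_persistence_general
    {d : ℕ} (F : Set (EuclideanSpace ℝ (Fin d)))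
    (K : EuclideanSpace ℝ (Fin d) → EuclideanSpace ℝ (Fin d) →
      Measure (EuclideanSpace ℝ (Fin d)))
    (hKprob : ∀ x y, IsProbabilityMeasure (K x y))
    (hKmeas : ∀ A : Set (EuclideanSpace ℝ (Fin d)), MeasurableSet A →
      Measurable (fun q : EuclideanSpace ℝ (Fin d) × EuclideanSpace ℝ (Fin d) =>
        K q.1 q.2 A))
    (p D I : EuclideanSpace ℝ (Fin d) → ℝ)
    (U a : EuclideanSpace ℝ (Fin d) → EuclideanSpace ℝ (Fin d) → ℝ)
    (hpmeas : Measurable p) (hDmeas : Measurable D) (hImeas : Measurable I)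
    (hUmeas : Measurable (fun q : EuclideanSpace ℝ (Fin d) × EuclideanSpace ℝ (Fin d) => U q.1 q.2))
    (hameas : Measurable (fun q : EuclideanSpace ℝ (Fin d) × EuclideanSpace ℝ (Fin d) => a q.1 q.2))
    (hasymm : ∀ x y, a x y = a y x)
    (hDnonneg : ∀ x ∈ F, 0 ≤ D x)
    (pl pu al au Du Il Iu Ul Uu : ℝ)
    (hal : 0 < al)
    (hIl : 0 < Il) (hIu : 0 < Iu) (hUl : 0 < Ul) (hUu : 0 < Uu)
    (hp : ∀ x ∈ F, pl ≤ p x ∧ p x ≤ pu)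
    (ha : ∀ x ∈ F, ∀ y ∈ F, al ≤ a x y ∧ a x y ≤ au)
    (hD : ∀ x ∈ F, D x ≤ Du)
    (hI : ∀ x ∈ F, Il ≤ I x ∧ I x ≤ Iu)
    (hU : ∀ x ∈ F, ∀ y ∈ F, Ul ≤ U x y ∧ U x y ≤ Uu)
    (m : EuclideanSpace ℝ (Fin d) → EuclideanSpace ℝ (Fin d) →
      Measure (EuclideanSpace ℝ (Fin d)) → ℝ)
    (μ₀ : Measure (EuclideanSpace ℝ (Fin d)))
    (μ : ℝ → Measure (EuclideanSpace ℝ (Fin d)))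
    (hμ : IsMildSolution F m K D I U μ₀ μ)
    (M : ℝ → ℝ) (hM : M = fun t => (μ t F).toReal) :
    -- the case of semi-random mating
    (m = semiRandomRate p →
      -- extinction : inf_z D(z) ≥ sup_z p(z)
      ((∃ c : ℝ, (∀ z ∈ F, c ≤ D z) ∧ (∀ w ∈ F, p w ≤ c)) →
        Tendsto M atTop (nhds 0)) ∧
      -- persistence : sup_z D(z) < inf_z p(z), provided M(0) > 0
      ((∃ c c' : ℝ, c < c' ∧ (∀ z ∈ F, D z ≤ c) ∧ (∀ w ∈ F, c' ≤ p w)) →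
        0 < μ₀ F → 0 < liminf M atTop)) ∧
    -- the case of assortative mating
    (m = assortativeRate a →
      ((∀ z ∈ F, 1 ≤ D z) → Tendsto M atTop (nhds 0)) ∧
      ((∃ c : ℝ, c < 1 ∧ ∀ z ∈ F, D z ≤ c) →
        0 < μ₀ F → 0 < liminf M atTop)) := by
  subst hM
  have hKmeas' := Measure.measurable_of_measurable_coe _ hKmeas
  have sandwich := fun {m bl bu dl du} (hμ : IsMildSolution F m K D I U μ₀ μ)
      (hm : IsMatingRateBetween F m bl bu) (hDF : ∀ x ∈ F, D x ∈ Icc dl du) =>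
    hμ.logisticSandwich hKprob hKmeas' hDmeas hImeas hUmeas hm hDF hIl.le hI hUl.le hU
  have hM₀ : 0 < μ₀ F → 0 < (μ 0 F).toReal := fun h => by
    have := (hμ.2.1 0 le_rfl).1
    exact ENNReal.toReal_pos (hμ.1 ▸ h.ne') (measure_ne_top _ _)
  refine ⟨fun hm => ?_, fun hm => ?_⟩ <;> subst hm
  · refine ⟨fun ⟨c, hDc, hpc⟩ => ?_, fun ⟨c, c', hcc', hDc, hpc'⟩ hμF => ?_⟩
    · exact (sandwich hμ
        (isMatingRateBetween_semiRandomRate hpmeas fun x hx => ⟨(hp x hx).1, hpc x hx⟩)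
        fun x hx => ⟨hDc x hx, hD x hx⟩).tendsto_zero (sub_self c).le (by positivity)
    · exact (sandwich hμ
        (isMatingRateBetween_semiRandomRate hpmeas fun x hx => ⟨hpc' x hx, (hp x hx).2⟩)
        fun x hx => ⟨hDnonneg x hx, hDc x hx⟩).liminf_pos (sub_pos.2 hcc') (by positivity)
        (by positivity) (hM₀ hμF)
  · have hm := isMatingRateBetween_assortativeRate hameas hasymm hal ha
    refine ⟨fun hD1 => ?_, fun ⟨c, hc1, hDc⟩ hμF => ?_⟩
    · exact (sandwich hμ hm fun x hx => ⟨hD1 x hx, hD x hx⟩).tendsto_zero (sub_self 1).le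
        (by positivity)
    · exact (sandwich hμ hm fun x hx => ⟨hDnonneg x hx, hDc x hx⟩).liminf_pos (sub_pos.2 hc1)
        (by positivity) (by positivity) (hM₀ hμF)

/-- Proposition on extinction and persistence.
Let `(μ_t)` solve the evolution equation and `M(t) = μ_t(F)`.
For semi-random mating: if `inf D ≥ sup p` the population becomes extinct
(`M(t) → 0`); if `sup D < inf p` the population is persistent
(`liminf M > 0` whenever `M(0) > 0`).  For assortative mating the same
holds with `sup p` and `inf p` replaced by `1`. -/
theorem extinction_and_persistence
    {d : ℕ} (F : Set (EuclideanSpace ℝ (Fin d)))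
    (hFclosed : IsClosed F) (hFconn : IsConnected F)
    (hFint : (interior F).Nonempty)
    (K : EuclideanSpace ℝ (Fin d) → EuclideanSpace ℝ (Fin d) →
      Measure (EuclideanSpace ℝ (Fin d)))
    (hKprob : ∀ x y, IsProbabilityMeasure (K x y))
    (hKsupp : ∀ x ∈ F, ∀ y ∈ F, K x y Fᶜ = 0)
    (hKsymm : ∀ x y, K x y = K y x)
    (hKmeas : ∀ A : Set (EuclideanSpace ℝ (Fin d)), MeasurableSet A →
      Measurable (fun q : EuclideanSpace ℝ (Fin d) × EuclideanSpace ℝ (Fin d) =>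
        K q.1 q.2 A))
    (p D I : EuclideanSpace ℝ (Fin d) → ℝ)
    (U a : EuclideanSpace ℝ (Fin d) → EuclideanSpace ℝ (Fin d) → ℝ)
    (hpmeas : Measurable p) (hDmeas : Measurable D) (hImeas : Measurable I)
    (hUmeas : Measurable (fun q : EuclideanSpace ℝ (Fin d) × EuclideanSpace ℝ (Fin d) => U q.1 q.2))
    (hameas : Measurable (fun q : EuclideanSpace ℝ (Fin d) × EuclideanSpace ℝ (Fin d) => a q.1 q.2))
    (hasymm : ∀ x y, a x y = a y x) (hUsymm : ∀ x y, U x y = U y x)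
    (hDnonneg : ∀ x ∈ F, 0 ≤ D x)
    (pl pu al au Du Il Iu Ul Uu : ℝ)
    (hpl : 0 < pl) (hpu : 0 < pu) (hal : 0 < al) (hau : 0 < au) (hDu : 0 < Du)
    (hIl : 0 < Il) (hIu : 0 < Iu) (hUl : 0 < Ul) (hUu : 0 < Uu)
    (hp : ∀ x ∈ F, pl ≤ p x ∧ p x ≤ pu)
    (ha : ∀ x ∈ F, ∀ y ∈ F, al ≤ a x y ∧ a x y ≤ au)
    (hD : ∀ x ∈ F, D x ≤ Du)
    (hI : ∀ x ∈ F, Il ≤ I x ∧ I x ≤ Iu)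
    (hU : ∀ x ∈ F, ∀ y ∈ F, Ul ≤ U x y ∧ U x y ≤ Uu)
    (m : EuclideanSpace ℝ (Fin d) → EuclideanSpace ℝ (Fin d) →
      Measure (EuclideanSpace ℝ (Fin d)) → ℝ)
    (μ₀ : Measure (EuclideanSpace ℝ (Fin d)))
    (hμ₀fin : IsFiniteMeasure μ₀) (hμ₀supp : μ₀ Fᶜ = 0)
    (μ : ℝ → Measure (EuclideanSpace ℝ (Fin d)))
    (hμ : IsMildSolution F m K D I U μ₀ μ)
    (M : ℝ → ℝ) (hM : M = fun t => (μ t F).toReal) :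
    -- the case of semi-random mating
    (m = semiRandomRate p →
      -- extinction : inf_z D(z) ≥ sup_z p(z)
      ((∃ c : ℝ, (∀ z ∈ F, c ≤ D z) ∧ (∀ w ∈ F, p w ≤ c)) →
        Tendsto M atTop (nhds 0)) ∧
      -- persistence : sup_z D(z) < inf_z p(z), provided M(0) > 0
      ((∃ c c' : ℝ, c < c' ∧ (∀ z ∈ F, D z ≤ c) ∧ (∀ w ∈ F, c' ≤ p w)) →
        0 < μ₀ F → 0 < liminf M atTop)) ∧
    -- the case of assortative mating
    (m = assortativeRate a →
      ((∀ z ∈ F, 1 ≤ D z) → Tendsto M atTop (nhds 0)) ∧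
      ((∃ c : ℝ, c < 1 ∧ ∀ z ∈ F, D z ≤ c) →
        0 < μ₀ F → 0 < liminf M atTop)) :=
  extinction_and_persistence_general F K hKprob hKmeas p D I U a hpmeas hDmeas hImeas hUmeas hameas
    hasymm hDnonneg pl pu al au Du Il Iu Ul Uu hal hIl hIu hUl hUu hp ha hD hI hU m μ₀ μ hμ M hM
end
end

section
/- Let Z be a random variable on ℝ with E Z = 0 and E Z² < ∞, having density h, and let K(x,y,·) be the law of (x+y)/2 + Z, i.e. K(x,y,dz) = h(z − (x+y)/2) dz. Then for every Borel probability measure μ on ℝ with finite second moment and first moment q, the measure 𝒫μ satisfies ∫ z² (𝒫μ)(dz) ≤ E Z² + q²/2 + (1/2) ∫ x² μ(dx). In particular condition (ii) of the asymptotic stability theorem holds with α = 2, L = 1/2 and C = E Z² + q²/2. -/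
/-!
Averaging two independent draws from `μ` and adding independent centred noise `Z` gives
`E ((X + Y)/2 + Z)² = E Z² + E ((X + Y)/2)² = E Z² + q²/2 + E X²/2`: the cross term with `Z`
vanishes because `Z` is centred, and the cross term `E X Y = q²` by independence. So the bound
holds with equality.
-/

open MeasureTheory Filter ENNReal

noncomputable section

/-- The operator `𝒫`. -/
def Pop (K : ℝ → ℝ → Measure ℝ) (μ : Measure ℝ) : Measure ℝ :=
  (μ.prod μ).bind fun q => K q.1 q.2

section Density

variable {h : ℝ → ℝ}

lemma lintegral_withDensity_comp_sub_const {f g : ℝ → ℝ≥0∞} (hf : Measurable f)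
    (hg : Measurable g) (c : ℝ) :
    ∫⁻ z, g z ∂volume.withDensity (fun z => f (z - c)) = ∫⁻ w, f w * g (w + c) := by
  rw [lintegral_withDensity_eq_lintegral_mul _ (by fun_prop : Measurable fun z => f (z - c)) hg]
  simpa using lintegral_sub_right_eq_self (fun w => f w * g (w + c)) c

lemma MeasureTheory.Integrable.id_mul_of_sq_mul (hnonneg : ∀ z, 0 ≤ h z) (hh : Integrable h)
    (hsq : Integrable (fun z => z ^ 2 * h z)) : Integrable (fun z => z * h z) := by
  refine (hh.add hsq).mono' (continuous_id.aestronglyMeasurable.mul hh.1) (.of_forall fun z => ?_)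
  have habs : |z| ≤ 1 + z ^ 2 := by nlinarith [sq_abs z, sq_nonneg (|z| - 1)]
  rw [norm_mul, Real.norm_eq_abs, Real.norm_of_nonneg (hnonneg z), Pi.add_apply]
  nlinarith [hnonneg z]

variable (hnonneg : ∀ z, 0 ≤ h z) (hh : Integrable h) (hsq : Integrable (fun z => z ^ 2 * h z))
include hnonneg hh hsq

lemma integrable_add_const_sq_mul (c : ℝ) : Integrable (fun w => (w + c) ^ 2 * h w) := by
  have hexp : (fun w => (w + c) ^ 2 * h w)
      = fun w => w ^ 2 * h w + 2 * c * (w * h w) + c ^ 2 * h w := by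
    funext w; ring
  rw [hexp]
  exact (hsq.add ((hh.id_mul_of_sq_mul hnonneg hsq).const_mul _)).add (hh.const_mul _)

lemma integral_add_const_sq_mul (hint : ∫ z, h z = 1) (hmean : ∫ z, z * h z = 0) (c : ℝ) :
    ∫ w, (w + c) ^ 2 * h w = (∫ w, w ^ 2 * h w) + c ^ 2 := by
  have hmeanInt := hh.id_mul_of_sq_mul hnonneg hsq
  have hexp : (fun w => (w + c) ^ 2 * h w)
      = fun w => w ^ 2 * h w + 2 * c * (w * h w) + c ^ 2 * h w := by
    funext w; ring
  have hsum : Integrable (fun w => w ^ 2 * h w + 2 * c * (w * h w)) :=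
    hsq.add (hmeanInt.const_mul _)
  rw [hexp, integral_add hsum (hh.const_mul _),
    integral_add hsq (hmeanInt.const_mul _), integral_const_mul, integral_const_mul, hmean, hint]
  ring

lemma lintegral_sq_withDensity_comp_sub_const (hmeas : Measurable h) (hint : ∫ z, h z = 1)
    (hmean : ∫ z, z * h z = 0) (c : ℝ) :
    ∫⁻ z, .ofReal (z ^ 2) ∂volume.withDensity (fun z => .ofReal (h (z - c)))
      = .ofReal ((∫ w, w ^ 2 * h w) + c ^ 2) := by
  rw [lintegral_withDensity_comp_sub_const hmeas.ennreal_ofReal (by fun_prop),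
    ← integral_add_const_sq_mul hnonneg hh hsq hint hmean,
    ofReal_integral_eq_lintegral_ofReal (integrable_add_const_sq_mul hnonneg hh hsq c)
      (.of_forall fun w => mul_nonneg (sq_nonneg _) (hnonneg w))]
  congr with w
  rw [ENNReal.ofReal_mul (sq_nonneg _), mul_comm]

end Density

section Product

variable {μ ν : Measure ℝ} [IsProbabilityMeasure μ] [IsProbabilityMeasure ν]

variable (hμ₁ : Integrable (fun x => x) μ) (hμ₂ : Integrable (fun x => x ^ 2) μ)
  (hν₁ : Integrable (fun y => y) ν) (hν₂ : Integrable (fun y => y ^ 2) ν)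
include hμ₁ hμ₂ hν₁ hν₂

lemma integrable_prod_add_sq : Integrable (fun p : ℝ × ℝ => (p.1 + p.2) ^ 2) (μ.prod ν) := by
  have hexp : (fun p : ℝ × ℝ => (p.1 + p.2) ^ 2)
      = fun p => p.1 ^ 2 + 2 * (p.1 * p.2) + p.2 ^ 2 := by
    funext p; ring
  rw [hexp]
  exact ((hμ₂.comp_fst ν).add ((hμ₁.mul_prod hν₁).const_mul 2)).add (hν₂.comp_snd μ)

lemma integral_prod_add_sq :
    ∫ p, (p.1 + p.2) ^ 2 ∂(μ.prod ν)
      = ∫ x, x ^ 2 ∂μ + 2 * (∫ x, x ∂μ) * (∫ y, y ∂ν) + ∫ y, y ^ 2 ∂ν := by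
  have hexp : (fun p : ℝ × ℝ => (p.1 + p.2) ^ 2)
      = fun p => p.1 ^ 2 + 2 * (p.1 * p.2) + p.2 ^ 2 := by
    funext p; ring
  have hsum : Integrable (fun p : ℝ × ℝ => p.1 ^ 2 + 2 * (p.1 * p.2)) (μ.prod ν) :=
    (hμ₂.comp_fst ν).add ((hμ₁.mul_prod hν₁).const_mul 2)
  rw [hexp, integral_add hsum (hν₂.comp_snd μ), integral_add (hμ₂.comp_fst ν)
    ((hμ₁.mul_prod hν₁).const_mul 2), integral_const_mul,
    integral_prod_mul (fun x => x) (fun y => y), integral_fun_fst (fun x => x ^ 2),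
    integral_fun_snd (fun y => y ^ 2)]
  simp only [probReal_univ, one_smul]
  ring

end Product

theorem additive_noise_second_moment_bound_general
    (h : ℝ → ℝ) (hmeas : Measurable h) (hnonneg : ∀ z, 0 ≤ h z)
    (hint : (∫ z, h z) = 1)
    (hmean : (∫ z, z * h z) = 0)
    (hsqInt : Integrable (fun z => z ^ 2 * h z) volume)
    (K : ℝ → ℝ → Measure ℝ)
    (hK : ∀ x y, K x y =
      volume.withDensity (fun z => ENNReal.ofReal (h (z - (x + y) / 2))))
    (q : ℝ) :
    ∀ μ : Measure ℝ, IsProbabilityMeasure μ →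
      Integrable (fun z => z) μ → Integrable (fun z => z ^ 2) μ →
      (∫ z, z ∂μ) = q →
      (∫ z, z ^ 2 ∂(Pop K μ))
        ≤ (∫ z, z ^ 2 * h z) + q ^ 2 / 2 + (1 / 2) * ∫ x, x ^ 2 ∂μ := by
  intro μ _ hμ₁ hμ₂ hq
  set EZ := ∫ z, z ^ 2 * h z
  have hh : Integrable h := .of_integral_ne_zero (hint ▸ one_ne_zero)
  have hKm : Measurable (fun p : ℝ × ℝ => K p.1 p.2) := by
    simp only [hK]
    exact measurable_withDensity (by fun_prop)
  have hinner (p : ℝ × ℝ) :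
      ∫⁻ z, .ofReal (z ^ 2) ∂K p.1 p.2 = .ofReal (EZ + ((p.1 + p.2) / 2) ^ 2) := by
    rw [hK]
    exact lintegral_sq_withDensity_comp_sub_const hnonneg hh hsqInt hmeas hint hmean _
  have hEZ : 0 ≤ EZ := integral_nonneg fun z => mul_nonneg (sq_nonneg z) (hnonneg z)
  have hsum := integrable_prod_add_sq hμ₁ hμ₂ hμ₁ hμ₂
  refine le_of_eq ?_
  calc ∫ z, z ^ 2 ∂Pop K μ
      = (∫⁻ z, .ofReal (z ^ 2) ∂Pop K μ).toReal :=
        integral_eq_lintegral_of_nonneg_ae (.of_forall fun z => sq_nonneg z) (by fun_prop)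
    _ = (∫⁻ p, .ofReal (EZ + ((p.1 + p.2) / 2) ^ 2) ∂(μ.prod μ)).toReal := by
        rw [Pop, Measure.lintegral_bind hKm.aemeasurable (by fun_prop)]
        simp only [hinner]
    _ = ∫ p, EZ + ((p.1 + p.2) / 2) ^ 2 ∂(μ.prod μ) :=
        (integral_eq_lintegral_of_nonneg_ae (.of_forall fun p => add_nonneg hEZ (sq_nonneg _))
          (by fun_prop)).symm
    _ = EZ + (∫ p, (p.1 + p.2) ^ 2 ∂(μ.prod μ)) / 2 ^ 2 := by
        simp_rw [div_pow]
        rw [integral_add (integrable_const _) (hsum.div_const _), integral_const, integral_div]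
        simp
    _ = EZ + q ^ 2 / 2 + (1 / 2) * ∫ x, x ^ 2 ∂μ := by
        rw [integral_prod_add_sq hμ₁ hμ₂ hμ₁ hμ₂, hq]
        ring

/-- Example: additive noise, second-moment bound.
Let `Z` have mean `0`, `E Z² < ∞` and density `h`, and let `K(x,y,·)` be the
law of `(x+y)/2 + Z`, i.e. `K(x,y,dz) = h(z − (x+y)/2) dz`.  Then for every
Borel probability measure `μ` on `ℝ` with finite second moment and first
moment `q`, `∫ z² (𝒫μ)(dz) ≤ E Z² + q²/2 + (1/2) ∫ x² μ(dx)`; i.e. condition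
(ii) of the asymptotic stability theorem holds with `α = 2`, `L = 1/2`,
`C = E Z² + q²/2`. -/
theorem additive_noise_second_moment_bound
    (h : ℝ → ℝ) (hmeas : Measurable h) (hnonneg : ∀ z, 0 ≤ h z)
    (hint : (∫ z, h z) = 1) (hIntegrable : Integrable h volume)
    (hmean : (∫ z, z * h z) = 0)
    (hmeanInt : Integrable (fun z => z * h z) volume)
    (hsqInt : Integrable (fun z => z ^ 2 * h z) volume)
    (K : ℝ → ℝ → Measure ℝ)
    (hK : ∀ x y, K x y =
      volume.withDensity (fun z => ENNReal.ofReal (h (z - (x + y) / 2))))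
    (q : ℝ) :
    ∀ μ : Measure ℝ, IsProbabilityMeasure μ →
      Integrable (fun z => z) μ → Integrable (fun z => z ^ 2) μ →
      (∫ z, z ∂μ) = q →
      (∫ z, z ^ 2 ∂(Pop K μ))
        ≤ (∫ z, z ^ 2 * h z) + q ^ 2 / 2 + (1 / 2) * ∫ x, x ^ 2 ∂μ :=
  additive_noise_second_moment_bound_general h hmeas hnonneg hint hmean hsqInt K hK q

end
end

section
/- Let h be a probability density supported in [0,1] with ∫_0^1 x h(x) dx = 1/2, and assume the support of h contains an interval (0, ε) for some ε > 0 (i.e. h > 0 a.e. on (0,ε)). Then for all α, β > 0, ∫_0^∞ |h(z/α)·z/α² − h(z/β)·z/β²| dz < 1. -/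
open MeasureTheory

/-!
Write `g x = x h(x)`. Then `z ↦ h(z/α) z/α²` is the density of the image of `g(x) dx` under
`x ↦ α x`, a nonnegative function of integral `∫ g = 1/2`, and likewise for `β`. For two such
densities `f₁, f₂`, `∫ |f₁ - f₂| = ∫ f₁ + ∫ f₂ - 2 ∫ min f₁ f₂ = 1 - 2 ∫ min f₁ f₂`, and the
overlap `min f₁ f₂` is positive a.e. on `(0, min α β · ε)`, so its integral is positive.
-/

/-- The density of the image of `g(x) dx` under `x ↦ c x`, for `c > 0`. -/
noncomputable def dilate (g : ℝ → ℝ) (c z : ℝ) : ℝ := g (z / c) / c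

section Dilate

variable {g : ℝ → ℝ} {c : ℝ}

theorem integral_dilate (hc : 0 < c) : ∫ z, dilate g c z = ∫ x, g x := by
  simp only [dilate, integral_div, Measure.integral_comp_div, abs_of_pos hc, smul_eq_mul]
  field_simp

theorem MeasureTheory.Integrable.dilate (hg : Integrable g) (hc : c ≠ 0) :
    Integrable (dilate g c) :=
  (hg.comp_div hc).div_const c

theorem dilate_nonneg (hg : ∀ x, 0 ≤ g x) (hc : 0 < c) (z : ℝ) : 0 ≤ dilate g c z :=
  div_nonneg (hg _) hc.le

theorem dilate_eq_zero_of_nonpos (hg : ∀ x ≤ 0, g x = 0) (hc : 0 < c) {z : ℝ} (hz : z ≤ 0) :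
    dilate g c z = 0 := by
  simp [dilate, hg _ (div_nonpos_of_nonpos_of_nonneg hz hc.le)]

theorem ae_pos_dilate_of_ae_pos_Ioo {ε : ℝ} (hg : ∀ᵐ x, x ∈ Set.Ioo 0 ε → 0 < g x)
    (hc : 0 < c) : ∀ᵐ z, z ∈ Set.Ioo 0 (c * ε) → 0 < dilate g c z := by
  have hqmp : Measure.QuasiMeasurePreserving (fun z : ℝ => z / c) := by
    have hsmul : (fun z : ℝ => z / c) = (c⁻¹ • ·) := by
      ext z
      rw [smul_eq_mul, div_eq_inv_mul]
    rw [hsmul]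
    exact Measure.quasiMeasurePreserving_smul volume (inv_ne_zero hc.ne')
  filter_upwards [hqmp.ae hg] with z hz hzIoo
  exact div_pos (hz ⟨div_pos hzIoo.1 hc, (div_lt_iff₀' hc).2 hzIoo.2⟩) hc

end Dilate

section Overlap

variable {α : Type*} [MeasurableSpace α] {μ : Measure α} {f g : α → ℝ}

theorem integral_abs_sub_eq (hf : Integrable f μ) (hg : Integrable g μ) :
    ∫ x, |f x - g x| ∂μ = ∫ x, f x ∂μ + ∫ x, g x ∂μ - 2 * ∫ x, min (f x) (g x) ∂μ := by
  calc ∫ x, |f x - g x| ∂μ = ∫ x, (f x + g x - 2 * min (f x) (g x)) ∂μ := by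
        congr with x
        linarith [min_add_max (f x) (g x), max_sub_min_eq_abs' (f x) (g x)]
    _ = _ := by
        have hsum : Integrable (fun x => f x + g x) μ := hf.add hg
        have hmin : Integrable (fun x => 2 * min (f x) (g x)) μ := (hf.inf hg).const_mul 2
        rw [integral_sub hsum hmin, integral_add hf hg, integral_const_mul]

theorem integral_abs_sub_lt_add (hf : Integrable f μ) (hg : Integrable g μ)
    (hf0 : 0 ≤ᵐ[μ] f) (hg0 : 0 ≤ᵐ[μ] g) {s : Set α} (hs : μ s ≠ 0)
    (hpos : ∀ᵐ x ∂μ, x ∈ s → 0 < f x ∧ 0 < g x) :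
    ∫ x, |f x - g x| ∂μ < ∫ x, f x ∂μ + ∫ x, g x ∂μ := by
  have hoverlap : 0 < ∫ x, min (f x) (g x) ∂μ := by
    rw [integral_pos_iff_support_of_nonneg_ae
      (hf0.and hg0 |>.mono fun x hx => le_min hx.1 hx.2) (hf.inf hg)]
    refine (pos_iff_ne_zero.2 hs).trans_le (measure_mono_ae ?_)
    filter_upwards [hpos] with x hx hxs
    exact (lt_min (hx hxs).1 (hx hxs).2).ne'
  rw [integral_abs_sub_eq hf hg]
  linarith

end Overlap

theorem integral_abs_dilate_sub_dilate_lt {g : ℝ → ℝ} (hg_int : Integrable g)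
    (hg_nonneg : ∀ x, 0 ≤ g x) {ε : ℝ} (hε : 0 < ε) (hg_pos : ∀ᵐ x, x ∈ Set.Ioo 0 ε → 0 < g x)
    {α β : ℝ} (hα : 0 < α) (hβ : 0 < β) :
    ∫ z, |dilate g α z - dilate g β z| < 2 * ∫ x, g x := by
  have hδ : volume (Set.Ioo 0 (min α β * ε)) ≠ 0 := by
    rw [Real.volume_Ioo, sub_zero, ne_eq, ENNReal.ofReal_eq_zero, not_le]
    exact mul_pos (lt_min hα hβ) hε
  have hpos : ∀ᵐ z, z ∈ Set.Ioo 0 (min α β * ε) → 0 < dilate g α z ∧ 0 < dilate g β z := by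
    filter_upwards [ae_pos_dilate_of_ae_pos_Ioo hg_pos hα,
      ae_pos_dilate_of_ae_pos_Ioo hg_pos hβ] with z hzα hzβ hz
    have hαε := mul_le_mul_of_nonneg_right (min_le_left α β) hε.le
    have hβε := mul_le_mul_of_nonneg_right (min_le_right α β) hε.le
    exact ⟨hzα ⟨hz.1, hz.2.trans_le hαε⟩, hzβ ⟨hz.1, hz.2.trans_le hβε⟩⟩
  have hlt := integral_abs_sub_lt_add (hg_int.dilate hα.ne') (hg_int.dilate hβ.ne')
    (ae_of_all _ (dilate_nonneg hg_nonneg hα)) (ae_of_all _ (dilate_nonneg hg_nonneg hβ)) hδ hpos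
  rwa [integral_dilate hα, integral_dilate hβ, ← two_mul] at hlt

theorem tjon_wu_contraction_condition_general
    (h : ℝ → ℝ) (hnonneg : ∀ z, 0 ≤ h z)
    (hsupp : ∀ z, z ∉ Set.Icc (0:ℝ) 1 → h z = 0)
    (hIntegrable : Integrable h volume)
    (hmean : (∫ z, z * h z) = 1 / 2)
    (ε : ℝ) (hε : 0 < ε)
    (hpos : ∀ᵐ z ∂(volume : Measure ℝ), z ∈ Set.Ioo 0 ε → 0 < h z) :
    ∀ α β : ℝ, 0 < α → 0 < β →
      (∫ z in Set.Ioi (0:ℝ),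
        |h (z / α) * z / α ^ 2 - h (z / β) * z / β ^ 2|) < 1 := by
  intro α β hα hβ
  have hg_zero : ∀ x ≤ 0, x * h x = 0 := fun x hx => by
    rcases hx.lt_or_eq with hx | rfl
    · rw [hsupp x fun hx' => hx.not_ge hx'.1, mul_zero]
    · rw [zero_mul]
  have hg_nonneg : ∀ x, 0 ≤ x * h x := fun x => by
    rcases le_total x 0 with hx | hx
    · exact (hg_zero x hx).ge
    · exact mul_nonneg hx (hnonneg x)
  have hg_int : Integrable fun x => x * h x := by
    refine (integrableOn_iff_integrable_of_support_subset (s := Set.Icc 0 1) fun x hx => ?_).1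
      (hIntegrable.integrableOn.continuousOn_mul continuousOn_id isCompact_Icc)
    by_contra hx'
    exact hx (by simp only [hsupp x hx', mul_zero])
  have hg_pos : ∀ᵐ x, x ∈ Set.Ioo 0 ε → 0 < x * h x :=
    hpos.mono fun x hx hxε => mul_pos hxε.1 (hx hxε)
  have hdilate : ∀ a z, h (z / a) * z / a ^ 2 = dilate (fun x => x * h x) a z := fun a z => by
    rw [dilate]
    ring
  simp only [hdilate]
  rw [setIntegral_eq_integral_of_forall_compl_eq_zero fun z hz => by
    rw [dilate_eq_zero_of_nonpos hg_zero hα (not_lt.1 hz),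
      dilate_eq_zero_of_nonpos hg_zero hβ (not_lt.1 hz), sub_zero, abs_zero]]
  have hlt := integral_abs_dilate_sub_dilate_lt hg_int hg_nonneg hε hg_pos hα hβ
  rwa [hmean, mul_one_div_cancel two_ne_zero] at hlt

/-- Tjon–Wu kernel: verification of the contraction
condition.  Let `h` be a probability density supported in `[0,1]` with
`∫_0^1 x h(x) dx = 1/2`, positive a.e. on some interval `(0,ε)`.  Then for
all `α, β > 0`, `∫_0^∞ |h(z/α) z/α² − h(z/β) z/β²| dz < 1`. -/
theorem tjon_wu_contraction_condition
    (h : ℝ → ℝ) (hmeas : Measurable h) (hnonneg : ∀ z, 0 ≤ h z)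
    (hsupp : ∀ z, z ∉ Set.Icc (0:ℝ) 1 → h z = 0)
    (hint : (∫ z, h z) = 1) (hIntegrable : Integrable h volume)
    (hmean : (∫ z, z * h z) = 1 / 2)
    (ε : ℝ) (hε : 0 < ε)
    (hpos : ∀ᵐ z ∂(volume : Measure ℝ), z ∈ Set.Ioo 0 ε → 0 < h z) :
    ∀ α β : ℝ, 0 < α → 0 < β →
      (∫ z in Set.Ioi (0:ℝ),
        |h (z / α) * z / α ^ 2 - h (z / β) * z / β ^ 2|) < 1 :=
  tjon_wu_contraction_condition_general h hnonneg hsupp hIntegrable hmean ε hε hpos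
end

section
/- Let Z be a random variable with values in [0,1] having a density h with E Z = ∫_0^1 x h(x) dx = 1/2, and let K(x,y,·) be the law of (x+y)·Z, i.e. K(x,y,dz) = (x+y)^{−1} h(z/(x+y)) dz on [0, x+y]. Then for every Borel probability measure μ on [0,∞) with finite second moment and first moment q, ∫_0^∞ z² (𝒫μ)(dz) ≤ 2q² E Z² + 2 E Z² ∫_0^∞ y² μ(dy); moreover L := 2 E Z² < 1, so condition (ii) of the asymptotic stability theorem holds with α = 2, C = 2q² E Z² and L = 2 E Z². -/
open MeasureTheory Filter ENNReal

noncomputable section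

/-!
If `X`, `Y` are independent with law `μ` and `Z` is independent of them with density `h`, then
`𝒫μ` is the law of `(X + Y) Z`, so its second moment factorises as
`E (X + Y)² · E Z² = (2 q² + 2 E X²) E Z²`: the bound holds with equality. Since `0 ≤ Z ≤ 1`,
`Z² ≤ Z` with equality only where `Z ∈ {0, 1}`, and `E Z = 1/2 ≠ 0` forces `E Z² < E Z = 1/2`.
-/

section Density

variable {f : ℝ → ℝ}

lemma integrable_sq_mul_of_integrable_mul (hsupp : ∀ z, z ∉ Set.Icc (0 : ℝ) 1 → f z = 0)
    (hf : Integrable (fun z => z * f z)) : Integrable (fun z => z ^ 2 * f z) := by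
  refine hf.mono ?_ (ae_of_all _ fun z => ?_)
  · exact (aestronglyMeasurable_id.mul hf.1).congr (ae_of_all _ fun z => by simp [sq, mul_assoc])
  · by_cases hz : z ∈ Set.Icc (0 : ℝ) 1
    · rw [Real.norm_eq_abs, Real.norm_eq_abs, sq, mul_assoc, abs_mul]
      exact mul_le_of_le_one_left (abs_nonneg _) (abs_le.2 ⟨by linarith [hz.1], hz.2⟩)
    · simp [hsupp z hz]

lemma integral_sq_mul_lt_integral_mul (hf0 : ∀ z, 0 ≤ f z)
    (hsupp : ∀ z, z ∉ Set.Icc (0 : ℝ) 1 → f z = 0) (hmean : ∫ z, z * f z ≠ 0) :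
    ∫ z, z ^ 2 * f z < ∫ z, z * f z := by
  have hf1 := Integrable.of_integral_ne_zero hmean
  have hf2 := integrable_sq_mul_of_integrable_mul hsupp hf1
  set g : ℝ → ℝ := fun z => z * f z - z ^ 2 * f z
  have hg0 : ∀ z, 0 ≤ g z := fun z => by
    by_cases hz : z ∈ Set.Icc (0 : ℝ) 1
    · have : 0 ≤ z * (1 - z) * f z := mul_nonneg (mul_nonneg hz.1 (by linarith [hz.2])) (hf0 z)
      simp only [g]; nlinarith
    · simp [g, hsupp z hz]
  suffices 0 < ∫ z, g z by rwa [integral_sub hf1 hf2, sub_pos] at this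
  refine (integral_nonneg hg0).lt_of_ne fun hzero => hmean ?_
  have hg : g =ᵐ[volume] 0 := (integral_eq_zero_iff_of_nonneg hg0 (hf1.sub hf2)).1 hzero.symm
  -- `g z = (1 - z) * (z * f z)`, so `z * f z` vanishes wherever `g` does, except at `z = 1`.
  have hne : ∀ᵐ z : ℝ, z ≠ 1 := volume.ae_ne 1
  refine integral_eq_zero_of_ae ?_
  filter_upwards [hg, hne] with z hz hz1
  have : (1 - z) * (z * f z) = 0 := by simp only [g, Pi.zero_apply] at hz; linarith
  simpa [sub_eq_zero, Ne.symm hz1] using this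

end Density

lemma measurable_map_const_mul {M : Type*} [MeasurableSpace M] [Mul M] [MeasurableMul₂ M]
    (ν : Measure M) [SFinite ν] : Measurable fun c : M => ν.map (c * ·) := by
  have : (fun c : M => ν.map (c * ·)) = fun c => (ν.map (Prod.mk c)).map fun p => p.1 * p.2 := by
    funext c
    rw [Measure.map_map measurable_mul measurable_prodMk_left]
    rfl
  rw [this]
  exact (Measure.measurable_map _ measurable_mul).comp Measurable.map_prodMk_left

lemma lintegral_sq_bind_map_const_mul {X : Type*} [MeasurableSpace X] (ρ : Measure X)
    (ν : Measure ℝ) [SFinite ν] {s : X → ℝ} (hs : Measurable s) :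
    ∫⁻ z, ENNReal.ofReal (z ^ 2) ∂(ρ.bind fun p => ν.map (s p * ·))
      = (∫⁻ p, ENNReal.ofReal (s p ^ 2) ∂ρ) * ∫⁻ z, ENNReal.ofReal (z ^ 2) ∂ν := by
  have hsq : Measurable fun z : ℝ => ENNReal.ofReal (z ^ 2) := by fun_prop
  have hκ : Measurable fun p => ν.map (s p * ·) := (measurable_map_const_mul ν).comp hs
  rw [Measure.lintegral_bind hκ.aemeasurable hsq.aemeasurable,
    ← lintegral_mul_const _ (by fun_prop)]
  refine lintegral_congr fun p => ?_
  simp_rw [lintegral_map hsq (measurable_const_mul _), mul_pow, ENNReal.ofReal_mul (sq_nonneg _)]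
  exact lintegral_const_mul _ hsq

lemma lintegral_ofReal_withDensity_ofReal {α : Type*} [MeasurableSpace α] {μ : Measure α}
    {f g : α → ℝ} (hf : Measurable f) (hf0 : ∀ x, 0 ≤ f x) (hg : Measurable g)
    (hg0 : ∀ x, 0 ≤ g x) (hgf : Integrable (fun x => g x * f x) μ) :
    ∫⁻ x, ENNReal.ofReal (g x) ∂(μ.withDensity fun x => ENNReal.ofReal (f x))
      = ENNReal.ofReal (∫ x, g x * f x ∂μ) := by
  rw [lintegral_withDensity_eq_lintegral_mul _ hf.ennreal_ofReal hg.ennreal_ofReal,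
    ofReal_integral_eq_lintegral_ofReal hgf (ae_of_all _ fun x => mul_nonneg (hg0 x) (hf0 x))]
  refine lintegral_congr fun x => ?_
  rw [Pi.mul_apply, ← ENNReal.ofReal_mul (hf0 x), mul_comm]

lemma lintegral_add_sq_prod (μ ν : Measure ℝ) [IsProbabilityMeasure μ] [IsProbabilityMeasure ν]
    (hμ1 : Integrable (fun x => x) μ) (hμ2 : Integrable (fun x => x ^ 2) μ)
    (hν1 : Integrable (fun y => y) ν) (hν2 : Integrable (fun y => y ^ 2) ν) :
    ∫⁻ p, ENNReal.ofReal ((p.1 + p.2) ^ 2) ∂(μ.prod ν)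
      = ENNReal.ofReal (∫ x, x ^ 2 ∂μ + 2 * (∫ x, x ∂μ) * (∫ y, y ∂ν) + ∫ y, y ^ 2 ∂ν) := by
  have hx2 : Integrable (fun p : ℝ × ℝ => p.1 ^ 2) (μ.prod ν) := hμ2.comp_fst ν
  have hxy : Integrable (fun p : ℝ × ℝ => 2 * (p.1 * p.2)) (μ.prod ν) :=
    (hμ1.mul_prod hν1).const_mul 2
  have hy2 : Integrable (fun p : ℝ × ℝ => p.2 ^ 2) (μ.prod ν) := hν2.comp_snd μ
  have hx2xy : Integrable (fun p : ℝ × ℝ => p.1 ^ 2 + 2 * (p.1 * p.2)) (μ.prod ν) := hx2.add hxy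
  have hexpand : (fun p : ℝ × ℝ => (p.1 + p.2) ^ 2)
      = fun p => p.1 ^ 2 + 2 * (p.1 * p.2) + p.2 ^ 2 := by
    funext p; ring
  rw [← ofReal_integral_eq_lintegral_ofReal (hexpand ▸ hx2xy.add hy2)
    (ae_of_all _ fun p => sq_nonneg _), hexpand, integral_add hx2xy hy2,
    integral_add hx2 hxy, integral_const_mul, integral_prod_mul (fun x => x) (fun y => y),
    integral_fun_fst (fun x : ℝ => x ^ 2), integral_fun_snd (fun y : ℝ => y ^ 2)]
  simp [mul_assoc]

theorem tjon_wu_second_moment_bound_general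
    (h : ℝ → ℝ) (hmeas : Measurable h) (hnonneg : ∀ z, 0 ≤ h z)
    (hsupp : ∀ z, z ∉ Set.Icc (0:ℝ) 1 → h z = 0)
    (hmean : (∫ z, z * h z) = 1 / 2)
    (K : ℝ → ℝ → Measure ℝ)
    (hK : ∀ x y, K x y =
      (volume.withDensity (fun z => ENNReal.ofReal (h z))).map
        (fun z => (x + y) * z))
    (q : ℝ) :
    2 * (∫ z, z ^ 2 * h z) < 1 ∧
    ∀ μ : Measure ℝ, IsProbabilityMeasure μ → μ (Set.Iio (0:ℝ)) = 0 →
      Integrable (fun z => z) μ → Integrable (fun z => z ^ 2) μ →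
      (∫ z, z ∂μ) = q →
      (∫ z, z ^ 2 ∂(Pop K μ))
        ≤ 2 * q ^ 2 * (∫ z, z ^ 2 * h z)
          + 2 * (∫ z, z ^ 2 * h z) * ∫ y, y ^ 2 ∂μ := by
  have hmean_ne : ∫ z, z * h z ≠ 0 := by rw [hmean]; norm_num
  refine ⟨by linarith [integral_sq_mul_lt_integral_mul hnonneg hsupp hmean_ne], ?_⟩
  intro μ _ _ hμ1 hμ2 hq
  have hPop : Pop K μ = (μ.prod μ).bind fun p =>
      (volume.withDensity fun z => ENNReal.ofReal (h z)).map ((p.1 + p.2) * ·) := by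
    simp only [Pop, hK]
  have hmoment := lintegral_sq_bind_map_const_mul (μ.prod μ)
    (volume.withDensity fun z => ENNReal.ofReal (h z)) (s := fun p => p.1 + p.2) (by fun_prop)
  rw [lintegral_add_sq_prod μ μ hμ1 hμ2 hμ1 hμ2, lintegral_ofReal_withDensity_ofReal hmeas hnonneg
    (by fun_prop) sq_nonneg (integrable_sq_mul_of_integrable_mul hsupp
      (Integrable.of_integral_ne_zero hmean_ne)), ← hPop] at hmoment
  have hI : 0 ≤ ∫ x, x ^ 2 ∂μ + 2 * q * q + ∫ x, x ^ 2 ∂μ := by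
    nlinarith [integral_nonneg (μ := μ) (f := fun x : ℝ => x ^ 2) sq_nonneg, sq_nonneg q]
  have hm2 : 0 ≤ ∫ z, z ^ 2 * h z := integral_nonneg fun z => mul_nonneg (sq_nonneg z) (hnonneg z)
  rw [integral_eq_lintegral_of_nonneg_ae (ae_of_all _ sq_nonneg) (by fun_prop), hmoment, hq,
    ← ENNReal.ofReal_mul hI, ENNReal.toReal_ofReal (mul_nonneg hI hm2)]
  linarith

/-- Tjon–Wu kernel: second-moment bound.  Let `Z ∈ [0,1]`
have density `h` with `E Z = 1/2`, and let `K(x,y,·)` be the law of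
`(x+y)Z`.  Then for every Borel probability measure `μ` on `[0,∞)` with
finite second moment and first moment `q`,
`∫ z² (𝒫μ)(dz) ≤ 2q² E Z² + 2 E Z² ∫ y² μ(dy)`; moreover `L := 2 E Z² < 1`,
so condition (ii) of the asymptotic stability theorem holds with `α = 2`,
`C = 2q² E Z²` and `L = 2 E Z²`. -/
theorem tjon_wu_second_moment_bound
    (h : ℝ → ℝ) (hmeas : Measurable h) (hnonneg : ∀ z, 0 ≤ h z)
    (hsupp : ∀ z, z ∉ Set.Icc (0:ℝ) 1 → h z = 0)
    (hint : (∫ z, h z) = 1) (hIntegrable : Integrable h volume)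
    (hmean : (∫ z, z * h z) = 1 / 2)
    (K : ℝ → ℝ → Measure ℝ)
    (hK : ∀ x y, K x y =
      (volume.withDensity (fun z => ENNReal.ofReal (h z))).map
        (fun z => (x + y) * z))
    (q : ℝ) :
    2 * (∫ z, z ^ 2 * h z) < 1 ∧
    ∀ μ : Measure ℝ, IsProbabilityMeasure μ → μ (Set.Iio (0:ℝ)) = 0 →
      Integrable (fun z => z) μ → Integrable (fun z => z ^ 2) μ →
      (∫ z, z ∂μ) = q →
      (∫ z, z ^ 2 ∂(Pop K μ))
        ≤ 2 * q ^ 2 * (∫ z, z ^ 2 * h z)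
          + 2 * (∫ z, z ^ 2 * h z) * ∫ y, y ^ 2 ∂μ :=
  tjon_wu_second_moment_bound_general h hmeas hnonneg hsupp hmean K hK q
end
end
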